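/- arXiv:0711.2873 — 3 statements merged into one kernel-verified Lean document; each statement's English description precedes it below -/
import Mathlib

section
/- Fix a depth i with 0 ≤ i ≤ n. Then the full trellis distribution θ^D(T) = Σ_{P : A → B} λ(P) · δ_{f(P)} satisfies θ^D(T) = Σ_{v : depth(v) = i} α^D(v) * β^D(v), where * denotes convolution of finitely supported functions. (Distribution decomposition, part of Theorem 6 of the paper.) -/
open Finset

/-- `IsPath einit efin u v P` means the list of edges `P = e₁⋯e_L` is a path from
vertex `u` to vertex `v`: `init e₁ = u`, `fin e_L = v` and `fin e_j = init e_{j+1}`;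
the empty list is a path from every vertex to itself. -/
def IsPath {V E : Type*} (einit efin : E → V) : V → V → List E → Prop
  | u, v, [] => u = v
  | u, v, e :: es => einit e = u ∧ IsPath einit efin (efin e) v es

/-- The λ-label of a path: the product of the λ-labels of its edges. -/
noncomputable def pathLam {E : Type*} (lam : E → ℝ) (P : List E) : ℝ :=
  (P.map lam).prod

/-- The value `f(P)` of a path: the sum of the values `g(e)` of its edges. -/
noncomputable def pathF {E : Type*} (g : E → ℝ) (P : List E) : ℝ :=
  (P.map g).sum

/-- The `m`-th forward numerator `α^(m)(v) = Σ_{P : A → v} f(P)^m · λ(P)`. -/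
noncomputable def alphaNum {V E : Type*} (lam g : E → ℝ)
    (paths : V → V → Finset (List E)) (A : V) (m : ℕ) (v : V) : ℝ :=
  ∑ P ∈ paths A v, pathF g P ^ m * pathLam lam P

/-- The `m`-th backward numerator `β^(m)(v) = Σ_{P : v → B} f(P)^m · λ(P)`. -/
noncomputable def betaNum {V E : Type*} (lam g : E → ℝ)
    (paths : V → V → Finset (List E)) (B : V) (m : ℕ) (v : V) : ℝ :=
  ∑ P ∈ paths v B, pathF g P ^ m * pathLam lam P

/-- The forward distribution `α^D(v) = Σ_{P : A → v} λ(P) · δ_{f(P)}`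
as a finitely supported function `ℝ →₀ ℝ`. -/
noncomputable def alphaDist {V E : Type*} (lam g : E → ℝ)
    (paths : V → V → Finset (List E)) (A : V) (v : V) : ℝ →₀ ℝ :=
  ∑ P ∈ paths A v, pathLam lam P • Finsupp.single (pathF g P) (1 : ℝ)

/-- The backward distribution `β^D(v) = Σ_{P : v → B} λ(P) · δ_{f(P)}`. -/
noncomputable def betaDist {V E : Type*} (lam g : E → ℝ)
    (paths : V → V → Finset (List E)) (B : V) (v : V) : ℝ →₀ ℝ :=
  ∑ P ∈ paths v B, pathLam lam P • Finsupp.single (pathF g P) (1 : ℝ)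

/-- Shift `a ⊞ b` of the domain of a finitely supported function `a` by `b`:
`(a ⊞ b)(u) = a(u − b)`, i.e. `Σ_u a(u) · δ_{u+b}`. -/
noncomputable def fshift (a : ℝ →₀ ℝ) (b : ℝ) : ℝ →₀ ℝ :=
  Finsupp.mapDomain (fun u => u + b) a

/-- Convolution of finitely supported functions: `(a * b)(u) = Σ_{s+t=u} a(s) · b(t)`,
so that `δ_s * δ_t = δ_{s+t}` (multiplication in `AddMonoidAlgebra ℝ ℝ`). -/
noncomputable def conv (a b : ℝ →₀ ℝ) : ℝ →₀ ℝ :=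
  a.sum fun s as => b.sum fun t bt => Finsupp.single (s + t) (as * bt)

/-!
Cutting a path `A → B` after its first `i` edges splits it uniquely into a path `A → v` and
a path `v → B`, where `v` is the unique vertex of depth `i` on it, since depth grows by one
along each edge. Conversely every such pair concatenates to a path `A → B`. As `λ` is
multiplicative and `f` additive under concatenation, `λ(P₁P₂) δ_{f(P₁P₂)}` is the convolution
of `λ(P₁) δ_{f(P₁)}` and `λ(P₂) δ_{f(P₂)}`, and convolution is bilinear, being the
multiplication of the monoid algebra `ℝ[ℝ]`.
-/

open AddMonoidAlgebra in
theorem conv_eq_coeff_mul (a b : ℝ →₀ ℝ) :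
    conv a b = (ofCoeff a * ofCoeff b : ℝ[ℝ]).coeff := by
  simp [AddMonoidAlgebra.mul_def, conv]

theorem conv_sum_smul_single {ι κ : Type*} (s : Finset ι) (t : Finset κ)
    (c : ι → ℝ) (d : κ → ℝ) (x : ι → ℝ) (y : κ → ℝ) :
    conv (∑ p ∈ s, c p • Finsupp.single (x p) (1 : ℝ))
         (∑ q ∈ t, d q • Finsupp.single (y q) (1 : ℝ)) =
    ∑ p ∈ s, ∑ q ∈ t, (c p * d q) • Finsupp.single (x p + y q) (1 : ℝ) := by
  simp [conv_eq_coeff_mul, Finset.sum_mul_sum]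

namespace IsPath

variable {V E : Type*} {einit efin : E → V}

theorem append_iff {P₁ P₂ : List E} {u v : V} :
    IsPath einit efin u v (P₁ ++ P₂) ↔
      ∃ w, IsPath einit efin u w P₁ ∧ IsPath einit efin w v P₂ := by
  induction P₁ generalizing u with
  | nil => simp [IsPath]
  | cons e es ih => simp [IsPath, ih, and_assoc]

theorem target_unique {P : List E} {u w w' : V} (h : IsPath einit efin u w P)
    (h' : IsPath einit efin u w' P) : w = w' := by
  induction P generalizing u with
  | nil => exact h.symm.trans h'
  | cons e es ih => exact ih h.2 h'.2

theorem depth_eq {depth : V → ℕ} (hdepth : ∀ e, depth (efin e) = depth (einit e) + 1)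
    {P : List E} {u v : V} (h : IsPath einit efin u v P) :
    depth v = depth u + P.length := by
  induction P generalizing u with
  | nil => cases (h : u = v); rfl
  | cons e es ih => rw [ih h.2, hdepth, h.1, List.length_cons]; ring

end IsPath

theorem pathLam_append {E : Type*} (lam : E → ℝ) (P₁ P₂ : List E) :
    pathLam lam (P₁ ++ P₂) = pathLam lam P₁ * pathLam lam P₂ := by
  simp [pathLam]

theorem pathF_append {E : Type*} (g : E → ℝ) (P₁ P₂ : List E) :
    pathF g (P₁ ++ P₂) = pathF g P₁ + pathF g P₂ := by
  simp [pathF]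

theorem sum_paths_eq_sum_split_at_depth {V E M : Type*} [Fintype V] [AddCommMonoid M]
    {einit efin : E → V} {depth : V → ℕ}
    (hdepth : ∀ e, depth (efin e) = depth (einit e) + 1)
    {paths : V → V → Finset (List E)}
    (hpaths : ∀ u v P, P ∈ paths u v ↔ IsPath einit efin u v P)
    {A B : V} {d : ℕ} (hAd : depth A ≤ d) (hdB : d ≤ depth B) (F : List E → M) :
    ∑ P ∈ paths A B, F P =
      ∑ v ∈ Finset.univ.filter (fun v => depth v = d),
        ∑ P₁ ∈ paths A v, ∑ P₂ ∈ paths v B, F (P₁ ++ P₂) := by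
  have hlen : ∀ {v P}, P ∈ paths A v → depth v = d → P.length = d - depth A :=
    fun hP hv => by have := ((hpaths _ _ _).1 hP).depth_eq hdepth; omega
  simp_rw [← Finset.sum_product']
  rw [Finset.sum_sigma']
  symm
  refine Finset.sum_bij (fun q _ => q.2.1 ++ q.2.2) ?_ ?_ ?_ (fun _ _ => rfl)
  · rintro ⟨v, P₁, P₂⟩ hq
    simp only [Finset.mem_sigma, Finset.mem_filter, Finset.mem_product, hpaths] at hq ⊢
    exact IsPath.append_iff.2 ⟨v, hq.2⟩
  · rintro ⟨v, P₁, P₂⟩ hq ⟨v', Q₁, Q₂⟩ hq' heq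
    simp only [Finset.mem_sigma, Finset.mem_filter, Finset.mem_product] at hq hq'
    obtain ⟨rfl, rfl⟩ :=
      List.append_inj heq ((hlen hq.2.1 hq.1.2).trans (hlen hq'.2.1 hq'.1.2).symm)
    obtain rfl := ((hpaths _ _ _).1 hq.2.1).target_unique ((hpaths _ _ _).1 hq'.2.1)
    rfl
  · intro P hP
    set k := d - depth A
    have hsplit : IsPath einit efin A B (P.take k ++ P.drop k) := by
      rw [List.take_append_drop]; exact (hpaths _ _ _).1 hP
    obtain ⟨w, hw₁, hw₂⟩ := IsPath.append_iff.1 hsplit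
    have hPlen := ((hpaths _ _ _).1 hP).depth_eq hdepth
    have hw := hw₁.depth_eq hdepth
    rw [List.length_take] at hw
    refine ⟨⟨w, P.take k, P.drop k⟩, ?_, List.take_append_drop k P⟩
    simp only [Finset.mem_sigma, Finset.mem_filter, Finset.mem_product, hpaths,
      Finset.mem_univ, true_and]
    exact ⟨by omega, hw₁, hw₂⟩

theorem theta_distribution_decomposition_general {V E : Type*} [Fintype V]
    (einit efin : E → V) (depth : V → ℕ) (n : ℕ)
    (hdepth : ∀ e, depth (efin e) = depth (einit e) + 1)
    (A : V) (hA : depth A = 0) (B : V) (hB : depth B = n)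
    (lam g : E → ℝ)
    (paths : V → V → Finset (List E))
    (hpaths : ∀ u v P, P ∈ paths u v ↔ IsPath einit efin u v P)
    (i : ℕ) (hi : i ≤ n) :
    ∑ P ∈ paths A B, pathLam lam P • Finsupp.single (pathF g P) (1 : ℝ) =
      ∑ v ∈ Finset.univ.filter (fun v => depth v = i),
        conv (alphaDist lam g paths A v) (betaDist lam g paths B v) := by
  rw [sum_paths_eq_sum_split_at_depth hdepth hpaths (by omega : depth A ≤ i) (by omega)]
  refine Finset.sum_congr rfl fun v _ => ?_
  rw [alphaDist, betaDist, conv_sum_smul_single]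
  simp only [pathLam_append, pathF_append]

/-- **Distribution decomposition** (part of Theorem 6). For any depth `0 ≤ i ≤ n`,
the full trellis distribution `θ^D(T) = Σ_{P : A → B} λ(P) · δ_{f(P)}` satisfies
`θ^D(T) = Σ_{v : depth(v) = i} α^D(v) * β^D(v)` where `*` is convolution. -/
theorem theta_distribution_decomposition {V E : Type*} [Fintype V] [Fintype E]
    (einit efin : E → V) (depth : V → ℕ) (n : ℕ)
    (hdepth : ∀ e, depth (efin e) = depth (einit e) + 1)
    (A : V) (hA : depth A = 0) (B : V) (hB : depth B = n)
    (lam g : E → ℝ)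
    (paths : V → V → Finset (List E))
    (hpaths : ∀ u v P, P ∈ paths u v ↔ IsPath einit efin u v P)
    (i : ℕ) (hi : i ≤ n) :
    ∑ P ∈ paths A B, pathLam lam P • Finsupp.single (pathF g P) (1 : ℝ) =
      ∑ v ∈ Finset.univ.filter (fun v => depth v = i),
        conv (alphaDist lam g paths A v) (betaDist lam g paths B v) :=
  theta_distribution_decomposition_general einit efin depth n hdepth A hA B hB lam g paths hpaths i
    hi
end

section
/- Let S be a commutative semiring and let the edge labels take values λ(e), g(e) ∈ S, with λ(P) the product and f(P) the sum of the corresponding edge values along a path P, and α^(m)(v) = Σ_{P : A → v} λ(P) · f(P)^m (sums and products in S, with f(P)^0 = 1). Then for every vertex v with depth(v) ≥ 1 and every m ∈ ℕ, α^(m)(v) = Σ_{e : fin(e) = v} λ(e) · Σ_{l=0}^{m} C(m,l) • (g(e)^l · α^(m−l)(init(e))), where C(m,l) • s denotes the C(m,l)-fold sum of s ∈ S. (Semiring generalization of the forward recursion, Appendix C of the paper.) -/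
open Finset

/-- The λ-label of a path with labels in a commutative semiring `S`:
the product of the labels of its edges (empty product `1`). -/
def pathLamS {E S : Type*} [CommSemiring S] (lam : E → S) (P : List E) : S :=
  (P.map lam).prod

/-- The value `f(P)` of a path: the sum of the values `g(e)` of its edges
(empty sum `0`). -/
def pathFS {E S : Type*} [CommSemiring S] (g : E → S) (P : List E) : S :=
  (P.map g).sum

/-- The `m`-th forward numerator over a commutative semiring:
`α^(m)(v) = Σ_{P : A → v} λ(P) · f(P)^m` (with `f(P)^0 = 1`). -/
def alphaNumS {V E S : Type*} [CommSemiring S] (lam g : E → S)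
    (paths : V → V → Finset (List E)) (A : V) (m : ℕ) (v : V) : S :=
  ∑ P ∈ paths A v, pathLamS lam P * pathFS g P ^ m


lemma isPath_concat {V E : Type*} (einit efin : E → V) (u v : V) (P : List E) (e : E) :
    IsPath einit efin u v (P ++ [e]) ↔
      IsPath einit efin u (einit e) P ∧ efin e = v := by
  induction P generalizing u with
  | nil =>
    constructor
    · rintro ⟨h1, h2⟩; exact ⟨h1.symm, h2⟩
    · rintro ⟨h1, h2⟩; exact ⟨h1.symm, h2⟩
  | cons a P ih =>
    simp only [List.cons_append, IsPath]
    exact (and_congr_right fun _ => ih _).trans and_assoc.symm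

/-- **Semiring generalization of the forward recursion** (Appendix C). For a vertex `v`
with `depth(v) ≥ 1`,
`α^(m)(v) = Σ_{e : fin(e) = v} λ(e) · Σ_{l=0}^{m} C(m,l) • (g(e)^l · α^(m−l)(init(e)))`,
where `k • s` denotes the `k`-fold sum of `s` in `S`. -/
theorem forward_recursion_semiring {V E S : Type*} [CommSemiring S]
    [Fintype V] [Fintype E] [DecidableEq V]
    (einit efin : E → V) (depth : V → ℕ) (n : ℕ)
    (hdepth : ∀ e, depth (efin e) = depth (einit e) + 1)
    (A : V) (hA : depth A = 0) (B : V) (hB : depth B = n)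
    (lam g : E → S)
    (paths : V → V → Finset (List E))
    (hpaths : ∀ u v P, P ∈ paths u v ↔ IsPath einit efin u v P)
    (v : V) (hv : 1 ≤ depth v) (m : ℕ) :
    alphaNumS lam g paths A m v =
      ∑ e ∈ Finset.univ.filter (fun e => efin e = v),
        lam e * ∑ l ∈ Finset.range (m + 1),
          m.choose l • (g e ^ l * alphaNumS lam g paths A (m - l) (einit e)) := by
  classical
  have hne : ∀ P ∈ paths A v, P ≠ [] := by
    intro P hP h0
    subst h0
    have : A = v := (hpaths A v []).1 hP
    subst this
    omega
  have key : (∑ P ∈ paths A v, pathLamS lam P * pathFS g P ^ m) =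
      ∑ x ∈ (Finset.univ.filter (fun e => efin e = v)).sigma
        (fun e => paths A (einit e)),
        pathLamS lam (x.2 ++ [x.1]) * pathFS g (x.2 ++ [x.1]) ^ m := by
    refine Finset.sum_bij' (fun P hP => (⟨P.getLast (hne P hP), P.dropLast⟩ : Σ _ : E, List E))
      (fun x _ => x.2 ++ [x.1]) ?_ ?_ ?_ ?_ ?_
    · intro P hP
      have hP' := (hpaths A v P).1 hP
      have hform : P.dropLast ++ [P.getLast (hne P hP)] = P :=
        List.dropLast_append_getLast (hne P hP)
      rw [Finset.mem_sigma, Finset.mem_filter]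
      have := (isPath_concat einit efin A v P.dropLast (P.getLast (hne P hP))).1
        (by rw [hform]; exact hP')
      exact ⟨⟨Finset.mem_univ _, this.2⟩, (hpaths _ _ _).2 this.1⟩
    · intro x hx
      rw [Finset.mem_sigma, Finset.mem_filter] at hx
      exact (hpaths A v _).2 ((isPath_concat einit efin A v x.2 x.1).2
        ⟨(hpaths _ _ _).1 hx.2, hx.1.2⟩)
    · intro P hP
      exact List.dropLast_append_getLast (hne P hP)
    · intro x hx
      refine Sigma.ext ?_ (heq_of_eq ?_)
      · simp [List.getLast_append]
      · exact List.dropLast_concat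
    · intro P hP
      rw [List.dropLast_append_getLast (hne P hP)]
  rw [alphaNumS, key, Finset.sum_sigma]
  refine Finset.sum_congr rfl fun e he => ?_
  have hlam : ∀ Q : List E, pathLamS lam (Q ++ [e]) = pathLamS lam Q * lam e := by
    intro Q; simp [pathLamS]
  have hf : ∀ Q : List E, pathFS g (Q ++ [e]) = pathFS g Q + g e := by
    intro Q; simp [pathFS]
  simp only [hlam, hf, alphaNumS, nsmul_eq_mul, Finset.mul_sum]
  rw [Finset.sum_comm]
  refine Finset.sum_congr rfl fun Q hQ => ?_
  rw [add_comm (pathFS g Q) (g e), add_pow, Finset.mul_sum]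
  refine Finset.sum_congr rfl fun l hl => ?_
  ring
end

section
/- Let v be a vertex of the trellis with depth(v) ≥ 1 and suppose α^(0)(u) ≠ 0 for all vertices u. Define the forward mean ᾱ(u) = α^(1)(u)/α^(0)(u). Then ᾱ(v) = Σ_{e : fin(e) = v} (ᾱ(init(e)) + g(e)) · ( λ(e)·α^(0)(init(e)) / Σ_{e' : fin(e') = v} λ(e')·α^(0)(init(e')) ), i.e. the forward mean at v is the weighted average of the shifted incoming forward means, weighted by the relative flows of the incoming edges. (Mean-value joining formula, Appendix B of the paper.) -/
open Finset

/-
Splitting off the last edge, every path from `A` to `v ≠ A` is uniquely `Q ++ [e]` with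
`fin e = v` and `Q` a path from `A` to `init e`; along this decomposition
`λ(Q ++ [e]) = λ(Q)·λ(e)` and `f(Q ++ [e]) = f(Q) + g(e)`. Hence
`α^(0)(v) = Σ_e λ(e)·α^(0)(init e)` and `α^(1)(v) = Σ_e λ(e)·(α^(1)(init e) + g(e)·α^(0)(init e))`,
and dividing the second identity by the first gives the joining formula.
-/

section Trellis

variable {V E : Type*} (einit efin : E → V)

lemma isPath_append_singleton (u v : V) (Q : List E) (e : E) :
    IsPath einit efin u v (Q ++ [e]) ↔ IsPath einit efin u (einit e) Q ∧ efin e = v := by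
  induction Q generalizing u with
  | nil => simp [IsPath, eq_comm]
  | cons a as ih => simp [IsPath, ih, and_assoc]

variable [Fintype E] [DecidableEq V]

lemma sum_paths_eq_sum_incoming {M : Type*} [AddCommMonoid M]
    (paths : V → V → Finset (List E))
    (hpaths : ∀ u v P, P ∈ paths u v ↔ IsPath einit efin u v P)
    {u v : V} (huv : u ≠ v) (F : List E → M) :
    ∑ P ∈ paths u v, F P =
      ∑ e ∈ univ.filter (fun e => efin e = v), ∑ Q ∈ paths u (einit e), F (Q ++ [e]) := by
  classical
  have hpaths_uv : paths u v =
      ((univ.filter (fun e => efin e = v)).sigma (fun e => paths u (einit e))).image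
        (fun x => x.2 ++ [x.1]) := by
    ext P
    simp only [mem_image, mem_sigma, mem_filter, mem_univ, true_and, Sigma.exists, hpaths]
    constructor
    · intro hP
      obtain rfl | ⟨Q, e, rfl⟩ := P.eq_nil_or_concat'
      · exact absurd hP huv
      · rw [isPath_append_singleton] at hP
        exact ⟨e, Q, ⟨hP.2, hP.1⟩, rfl⟩
    · rintro ⟨e, Q, ⟨he, hQ⟩, rfl⟩
      exact (isPath_append_singleton einit efin u v Q e).2 ⟨hQ, he⟩
  rw [hpaths_uv, sum_image, sum_sigma']
  rintro ⟨e, Q⟩ - ⟨e', Q'⟩ - hQe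
  obtain ⟨rfl, rfl⟩ := List.append_singleton_inj.1 hQe
  rfl

end Trellis

lemma pathLam_append_singleton {E : Type*} (lam : E → ℝ) (Q : List E) (e : E) :
    pathLam lam (Q ++ [e]) = pathLam lam Q * lam e := by
  simp [pathLam]

lemma pathF_append_singleton {E : Type*} (g : E → ℝ) (Q : List E) (e : E) :
    pathF g (Q ++ [e]) = pathF g Q + g e := by
  simp [pathF]

section ForwardRecursion

variable {V E : Type*} [Fintype E] [DecidableEq V] (einit efin : E → V) (lam g : E → ℝ)
  (paths : V → V → Finset (List E))
  (hpaths : ∀ u v P, P ∈ paths u v ↔ IsPath einit efin u v P)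
  {A v : V} (hAv : A ≠ v)
include hpaths hAv

lemma alphaNum_zero_eq_sum_incoming :
    alphaNum lam g paths A 0 v =
      ∑ e ∈ univ.filter (fun e => efin e = v), lam e * alphaNum lam g paths A 0 (einit e) := by
  rw [alphaNum, sum_paths_eq_sum_incoming einit efin paths hpaths hAv]
  refine sum_congr rfl fun e _ => ?_
  simp only [alphaNum, pow_zero, one_mul, mul_sum, pathLam_append_singleton]
  exact sum_congr rfl fun Q _ => mul_comm _ _

lemma alphaNum_one_eq_sum_incoming :
    alphaNum lam g paths A 1 v =
      ∑ e ∈ univ.filter (fun e => efin e = v),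
        lam e * (alphaNum lam g paths A 1 (einit e) + g e * alphaNum lam g paths A 0 (einit e)) := by
  rw [alphaNum, sum_paths_eq_sum_incoming einit efin paths hpaths hAv]
  refine sum_congr rfl fun e _ => ?_
  simp only [alphaNum, pow_one, pow_zero, one_mul, mul_sum, ← sum_add_distrib,
    pathLam_append_singleton, pathF_append_singleton]
  exact sum_congr rfl fun Q _ => by ring

end ForwardRecursion

theorem forward_mean_joining_general {V E : Type*} [Fintype E] [DecidableEq V]
    (einit efin : E → V) (depth : V → ℕ)
    (A : V) (hA : depth A = 0)
    (lam g : E → ℝ)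
    (paths : V → V → Finset (List E))
    (hpaths : ∀ u v P, P ∈ paths u v ↔ IsPath einit efin u v P)
    (h0 : ∀ u, alphaNum lam g paths A 0 u ≠ 0)
    (v : V) (hv : 1 ≤ depth v) :
    alphaNum lam g paths A 1 v / alphaNum lam g paths A 0 v =
      ∑ e ∈ Finset.univ.filter (fun e => efin e = v),
        (alphaNum lam g paths A 1 (einit e) / alphaNum lam g paths A 0 (einit e) + g e) *
          (lam e * alphaNum lam g paths A 0 (einit e) /
            ∑ e' ∈ Finset.univ.filter (fun e' => efin e' = v),
              lam e' * alphaNum lam g paths A 0 (einit e')) := by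
  have hAv : A ≠ v := fun h => by subst h; omega
  rw [alphaNum_one_eq_sum_incoming einit efin lam g paths hpaths hAv,
    ← alphaNum_zero_eq_sum_incoming einit efin lam g paths hpaths hAv, sum_div]
  refine sum_congr rfl fun e _ => ?_
  have := h0 (einit e)
  field_simp

/-- **Mean-value joining formula** (Appendix B). Suppose the flow `α^(0)(u)` is nonzero
at every vertex, and define the forward mean `ᾱ(u) = α^(1)(u)/α^(0)(u)`. Then for a
vertex `v` with `depth(v) ≥ 1`,
`ᾱ(v) = Σ_{e : fin(e) = v} (ᾱ(init(e)) + g(e)) ·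
  (λ(e)·α^(0)(init(e)) / Σ_{e' : fin(e') = v} λ(e')·α^(0)(init(e')))`,
i.e. the forward mean at `v` is the average of the shifted incoming forward means,
weighted by the relative flows of the incoming edges. -/
theorem forward_mean_joining {V E : Type*} [Fintype V] [Fintype E] [DecidableEq V]
    (einit efin : E → V) (depth : V → ℕ) (n : ℕ)
    (hdepth : ∀ e, depth (efin e) = depth (einit e) + 1)
    (A : V) (hA : depth A = 0) (B : V) (hB : depth B = n)
    (lam g : E → ℝ)
    (paths : V → V → Finset (List E))
    (hpaths : ∀ u v P, P ∈ paths u v ↔ IsPath einit efin u v P)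
    (h0 : ∀ u, alphaNum lam g paths A 0 u ≠ 0)
    (v : V) (hv : 1 ≤ depth v) :
    alphaNum lam g paths A 1 v / alphaNum lam g paths A 0 v =
      ∑ e ∈ Finset.univ.filter (fun e => efin e = v),
        (alphaNum lam g paths A 1 (einit e) / alphaNum lam g paths A 0 (einit e) + g e) *
          (lam e * alphaNum lam g paths A 0 (einit e) /
            ∑ e' ∈ Finset.univ.filter (fun e' => efin e' = v),
              lam e' * alphaNum lam g paths A 0 (einit e')) :=
  forward_mean_joining_general einit efin depth A hA lam g paths hpaths h0 v hv
end
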